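/- Let F be a linearly ordered field, let A be a gap of F, let (a_n) be a strictly increasing sequence in A with a := a_1 such that every x ∈ A with a_1 < x lies in the interval (a_n, a_{n+1}] for exactly one n ∈ ℕ, and let b ∈ F∖A. Define φ_n : [a,b] → F by φ_n(x) = 1 − χ_{[a,a_n]}(x). Then (φ_n) is a monotonically decreasing sequence of step functions [a,b] → P ∪ {0} with ∫_a^b φ_n = b − a_n for every n, and (φ_n(x)) converges to χ_E(x) for every x ∈ [a,b], where E := [a,b]∖A. In particular, E is a measurable subset of [a,b]. -/

import Mathlib

namespace Littlewood

variable {F : Type*} [Field F] [LinearOrder F] [IsStrictOrderedRing F]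

/-- A sequence `s` in `F` converges to `L`. -/
def SeqConv (s : ℕ → F) (L : F) : Prop :=
  ∀ ε : F, 0 < ε → ∃ N : ℕ, ∀ n, N ≤ n → s n - L ∈ Set.Ioo (-ε) ε

/-- `φ` is a step function on `[a,b]`: there is a partition
`a = x 0 < x 1 < ⋯ < x n = b` such that `φ` is constant on each open subinterval. -/
def IsStepOn (a b : F) (φ : F → F) : Prop :=
  ∃ (n : ℕ) (x : ℕ → F), x 0 = a ∧ x n = b ∧ (∀ i < n, x i < x (i + 1)) ∧
    ∀ i < n, ∃ M : F, ∀ t ∈ Set.Ioo (x i) (x (i + 1)), φ t = M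

/-- `I` is the integral of the step function `φ` over `[a,b]`, computed from
an admissible partition `a = x 0 < ⋯ < x n = b` with constant values `M i`. -/
def HasStepIntegral (a b : F) (φ : F → F) (I : F) : Prop :=
  ∃ (n : ℕ) (x : ℕ → F) (M : ℕ → F), x 0 = a ∧ x n = b ∧ (∀ i < n, x i < x (i + 1)) ∧
    (∀ i < n, ∀ t ∈ Set.Ioo (x i) (x (i + 1)), φ t = M i) ∧
    I = ∑ i ∈ Finset.range n, M i * (x (i + 1) - x i)

/-- `S ⊆ [a,b]` has measure zero: for every `ε > 0` there is a countable family of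
open intervals `(c n, d n) ⊆ [a,b]` covering `S` whose partial sums of lengths
converge to a sum less than `ε`. -/
def NullSet (a b : F) (S : Set F) : Prop :=
  ∀ ε : F, 0 < ε → ∃ c d : ℕ → F,
    (∀ n, c n ≤ d n ∧ Set.Ioo (c n) (d n) ⊆ Set.Icc a b) ∧
    S ⊆ (⋃ n, Set.Ioo (c n) (d n)) ∧
    ∃ s : F, s < ε ∧ SeqConv (fun N => ∑ k ∈ Finset.range N, (d k - c k)) s

/-- `Q` holds almost everywhere in `[a,b]`. -/
def AEOn (a b : F) (Q : F → Prop) : Prop :=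
  NullSet a b {x ∈ Set.Icc a b | ¬ Q x}

/-- `φ` is a monotonically decreasing sequence of step functions `[a,b] → P ∪ {0}`
converging to `f` almost everywhere in `[a,b]`. -/
def ApproxSeq (a b : F) (φ : ℕ → F → F) (f : F → F) : Prop :=
  (∀ n, IsStepOn a b (φ n)) ∧
  (∀ n, ∀ x ∈ Set.Icc a b, 0 ≤ φ n x) ∧
  (∀ n, ∀ x ∈ Set.Icc a b, φ (n + 1) x ≤ φ n x) ∧
  AEOn a b fun x => SeqConv (fun n => φ n x) (f x)

/-- A nonnegative-valued function on `[a,b]` is Lebesgue measurable. -/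
def LebMeasurableNN (a b : F) (f : F → F) : Prop :=
  ∃ φ : ℕ → F → F, ApproxSeq a b φ f

/-- A nonnegative-valued function on `[a,b]` has Lebesgue integral `I`:
it is Lebesgue measurable and for every monotonically decreasing sequence of
nonnegative step functions converging to `f` a.e., the sequence of their
(step) integrals converges to `I`. -/
def HasLebIntegralNN (a b : F) (f : F → F) (I : F) : Prop :=
  LebMeasurableNN a b f ∧
    ∀ φ : ℕ → F → F, ApproxSeq a b φ f →
      ∀ J : ℕ → F, (∀ n, HasStepIntegral a b (φ n) (J n)) → SeqConv J I

/-- A function `[a,b] → F` is Lebesgue measurable (via its nonnegative parts). -/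
def LebMeasurable (a b : F) (f : F → F) : Prop :=
  LebMeasurableNN a b (fun x => max (f x) 0) ∧ LebMeasurableNN a b fun x => max (-f x) 0

/-- A function `[a,b] → F` has a Lebesgue integral (via its nonnegative parts). -/
def HasLebIntegral (a b : F) (f : F → F) : Prop :=
  (∃ I : F, HasLebIntegralNN a b (fun x => max (f x) 0) I) ∧
  ∃ I : F, HasLebIntegralNN a b (fun x => max (-f x) 0) I

/-- The characteristic function of `E`. -/
noncomputable def chi (E : Set F) : F → F := E.indicator fun _ => 1

/-- `E ⊆ [a,b]` is a measurable set: its characteristic function is Lebesgue measurable. -/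
def MeasSet (a b : F) (E : Set F) : Prop := LebMeasurableNN a b (chi E)

/-- `E` has Lebesgue measure: `E` has measure zero or `χ_E` has a Lebesgue integral. -/
def HasLebMeasure (a b : F) (E : Set F) : Prop :=
  NullSet a b E ∨ ∃ I : F, HasLebIntegralNN a b (chi E) I

/-- `S` is an interval with endpoints `c ≤ d` (any of the four kinds). -/
def IsIntervalWith (S : Set F) (c d : F) : Prop :=
  S = Set.Icc c d ∨ S = Set.Ico c d ∨ S = Set.Ioc c d ∨ S = Set.Ioo c d

/-- `S` is an interval. -/
def IsInterval (S : Set F) : Prop := ∃ c d : F, IsIntervalWith S c d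

/-- `f` is continuous on `D`. -/
def ContOn (D : Set F) (f : F → F) : Prop :=
  ∀ c ∈ D, ∀ ε : F, 0 < ε → ∃ δ : F, 0 < δ ∧
    ∀ x ∈ D ∩ Set.Ioo (c - δ) (c + δ), f x - f c ∈ Set.Ioo (-ε) ε

/-- The functions `g n` converge uniformly to `f` on `D`. -/
def UnifConvOn (D : Set F) (g : ℕ → F → F) (f : F → F) : Prop :=
  ∀ ε : F, 0 < ε → ∃ N : ℕ, ∀ n, N ≤ n → ∀ x ∈ D, f x - g n x ∈ Set.Ioo (-ε) ε

/-- `A` is a cut of `F`. -/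
def IsCut (A : Set F) : Prop :=
  A.Nonempty ∧ A ≠ Set.univ ∧ ∀ x ∈ A, ∀ y ∉ A, x < y

/-- `c` is a cut point of `A`. -/
def IsCutPoint (A : Set F) (c : F) : Prop :=
  ∀ x ∈ A, ∀ y ∉ A, x ≤ c ∧ c ≤ y

variable (F) in
/-- The Cut Axiom: every cut of `F` has a cut point. -/
def CutAxiom : Prop := ∀ A : Set F, IsCut A → ∃ c : F, IsCutPoint A c

variable (F) in
/-- Lebesgue Integral Property. -/
def LIP : Prop :=
  ∀ a b : F, a ≤ b → ∀ f : F → F, LebMeasurable a b f → HasLebIntegral a b f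

variable (F) in
/-- Lebesgue Measure Property. -/
def LMP : Prop :=
  ∀ a b : F, a ≤ b → ∀ E ⊆ Set.Icc a b, MeasSet a b E → HasLebMeasure a b E

variable (F) in
/-- Littlewood's First Principle. -/
def LP1 : Prop :=
  ∀ a b : F, a ≤ b → ∀ E ⊆ Set.Icc a b, MeasSet a b E → ∀ ε : F, 0 < ε →
    ∃ (m : ℕ) (I : ℕ → Set F), (∀ i < m, IsInterval (I i) ∧ I i ⊆ Set.Icc a b) ∧
      ∃ J : F, HasLebIntegralNN a b
        (chi ((E \ ⋃ i < m, I i) ∪ ((⋃ i < m, I i) \ E))) J ∧ J < ε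

variable (F) in
/-- Littlewood's Second Principle. -/
def LP2 : Prop :=
  ∀ a b : F, a ≤ b → ∀ f : F → F, LebMeasurable a b f → ∀ ε : F, 0 < ε →
    ∃ E ⊆ Set.Icc a b, MeasSet a b E ∧ ContOn (Set.Icc a b \ E) f ∧
      ∃ J : F, HasLebIntegralNN a b (chi E) J ∧ J < ε

variable (F) in
/-- Littlewood's Third Principle. -/
def LP3 : Prop :=
  ∀ a b : F, a ≤ b → ∀ φ : ℕ → F → F, (∀ n, LebMeasurable a b (φ n)) →
    ∀ f : F → F, AEOn a b (fun x => SeqConv (fun n => φ n x) (f x)) →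
    ∀ ε : F, 0 < ε →
      ∃ E ⊆ Set.Icc a b, MeasSet a b E ∧ UnifConvOn (Set.Icc a b \ E) φ f ∧
        ∃ J : F, HasLebIntegralNN a b (chi E) J ∧ J < ε

end Littlewood

/-! On `[a, b]` the function `1 - χ_{[a, aₙ]}` is `0` up to `aₙ` and `1` after it. A point of
`A` lies below some `aₙ` because the intervals `(aₙ, aₙ₊₁]` exhaust `A` above `a`, while a point
of `[a, b] \ A` lies above every `aₙ ∈ A`. Hence the sequence is eventually constant, equal to
`χ_E`, at every point of `[a, b]`, and the exceptional set is empty. -/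

namespace Littlewood

open Set

section Chi

variable {F : Type*} [Field F] {E E' : Set F} {x : F}

lemma chi_of_mem (hx : x ∈ E) : chi E x = 1 := indicator_of_mem hx _

lemma chi_of_notMem (hx : x ∉ E) : chi E x = 0 := indicator_of_notMem hx _

variable [LinearOrder F] [IsStrictOrderedRing F]

lemma one_sub_chi_nonneg (E : Set F) (x : F) : 0 ≤ 1 - chi E x := by
  by_cases hx : x ∈ E <;> simp [chi_of_mem, chi_of_notMem, hx]

lemma chi_mono (h : E ⊆ E') (x : F) : chi E x ≤ chi E' x :=
  indicator_le_indicator_of_subset h (fun _ => zero_le_one) x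

end Chi

section StepIntegral

variable {F : Type*} [Field F] [LinearOrder F] {a b c M N I : F} {φ : F → F}

lemma HasStepIntegral.isStepOn (h : HasStepIntegral a b φ I) : IsStepOn a b φ :=
  let ⟨n, x, M, hx0, hxn, hx, hM, _⟩ := h
  ⟨n, x, hx0, hxn, hx, fun i hi => ⟨M i, hM i hi⟩⟩

lemma hasStepIntegral_of_eqOn_Ioo (hab : a < b) (hφ : ∀ t ∈ Ioo a b, φ t = M) :
    HasStepIntegral a b φ (M * (b - a)) :=
  ⟨1, fun i => if i = 0 then a else b, fun _ => M, rfl, rfl, by simpa using hab,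
    by simpa using hφ, by simp⟩

lemma hasStepIntegral_of_eqOn_Ioo_of_eqOn_Ioo (hac : a < c) (hcb : c < b)
    (hφ₁ : ∀ t ∈ Ioo a c, φ t = M) (hφ₂ : ∀ t ∈ Ioo c b, φ t = N) :
    HasStepIntegral a b φ (M * (c - a) + N * (b - c)) := by
  refine ⟨2, fun i => if i = 0 then a else if i = 1 then c else b,
    fun i => if i = 0 then M else N, rfl, rfl, ?_, ?_, ?_⟩
  · intro i hi
    interval_cases i <;> simpa
  · intro i hi
    interval_cases i
    · simpa using hφ₁
    · simpa using hφ₂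
  · simp [Finset.sum_range_succ]

lemma hasStepIntegral_one_sub_chi_Icc (hac : a ≤ c) (hcb : c < b) :
    HasStepIntegral a b (fun x => 1 - chi (Icc a c) x) (b - c) := by
  have above : ∀ t ∈ Ioo c b, 1 - chi (Icc a c) t = 1 := fun t ht => by
    rw [chi_of_notMem fun h => ht.1.not_ge h.2, sub_zero]
  rcases hac.eq_or_lt with rfl | hac
  · simpa using hasStepIntegral_of_eqOn_Ioo hcb above
  · have below : ∀ t ∈ Ioo a c, 1 - chi (Icc a c) t = 0 := fun t ht => by
      rw [chi_of_mem (Ioo_subset_Icc_self ht), sub_self]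
    simpa using hasStepIntegral_of_eqOn_Ioo_of_eqOn_Ioo hac hcb below above

end StepIntegral

lemma exists_le_of_mem_Ioc_cover {α : Type*} [LinearOrder α] {s : ℕ → α} {x : α}
    (h : s 0 < x → ∃ n, x ∈ Ioc (s n) (s (n + 1))) : ∃ n, x ≤ s n := by
  by_cases hx : s 0 < x
  · obtain ⟨n, hn⟩ := h hx
    exact ⟨n + 1, hn.2⟩
  · exact ⟨0, not_lt.mp hx⟩

lemma eventually_one_sub_chi_Icc_eq_chi_diff {F : Type*} [Field F] [LinearOrder F] {A : Set F}
    (hA : ∀ x ∈ A, ∀ y ∉ A, x < y) {s : ℕ → F} (hmem : ∀ n, s n ∈ A) (hs : Monotone s)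
    (hcofinal : ∀ x ∈ A, ∃ n, x ≤ s n)
    {b x : F} (hx : x ∈ Icc (s 0) b) :
    ∃ N, ∀ n ≥ N, 1 - chi (Icc (s 0) (s n)) x = chi (Icc (s 0) b \ A) x := by
  by_cases hxA : x ∈ A
  · obtain ⟨N, hN⟩ := hcofinal x hxA
    refine ⟨N, fun n hn => ?_⟩
    rw [chi_of_mem (show x ∈ Icc (s 0) (s n) from ⟨hx.1, hN.trans (hs hn)⟩),
      chi_of_notMem fun h => h.2 hxA, sub_self]
  · refine ⟨0, fun n _ => ?_⟩
    rw [chi_of_notMem fun h => (hA _ (hmem n) _ hxA).not_ge h.2,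
      chi_of_mem (show x ∈ Icc (s 0) b \ A from ⟨hx, hxA⟩), sub_zero]

variable {F : Type*} [Field F] [LinearOrder F] [IsStrictOrderedRing F]

lemma seqConv_of_eventually_eq {s : ℕ → F} {L : F} (h : ∃ N, ∀ n ≥ N, s n = L) :
    SeqConv s L := by
  obtain ⟨N, hN⟩ := h
  intro ε hε
  exact ⟨N, fun n hn => by simp [hN n hn, hε]⟩

lemma nullSet_empty (a b : F) : NullSet a b ∅ := fun _ hε =>
  ⟨fun _ => a, fun _ => a, fun _ => ⟨le_rfl, by simp⟩, empty_subset _, 0, hε,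
    seqConv_of_eventually_eq ⟨0, fun _ _ => by simp⟩⟩

lemma aeOn_of_forall {a b : F} {Q : F → Prop} (h : ∀ x ∈ Icc a b, Q x) : AEOn a b Q := by
  rw [AEOn, sep_eq_empty_iff_mem_false.mpr fun x hx => not_not.mpr (h x hx)]
  exact nullSet_empty a b

theorem gap_gives_measurable_set_general (F : Type*) [Field F] [LinearOrder F] [IsStrictOrderedRing F]
    (A : Set F) (hcut : IsCut A)
    (s : ℕ → F) (hmem : ∀ n, s n ∈ A) (hmono : StrictMono s)
    (hcover : ∀ x ∈ A, s 0 < x → ∃! n : ℕ, x ∈ Set.Ioc (s n) (s (n + 1)))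
    (b : F) (hb : b ∉ A) :
    (∀ n, IsStepOn (s 0) b fun x => 1 - chi (Set.Icc (s 0) (s n)) x) ∧
    (∀ n, ∀ x ∈ Set.Icc (s 0) b, 0 ≤ 1 - chi (Set.Icc (s 0) (s n)) x) ∧
    (∀ n, ∀ x ∈ Set.Icc (s 0) b,
      1 - chi (Set.Icc (s 0) (s (n + 1))) x ≤ 1 - chi (Set.Icc (s 0) (s n)) x) ∧
    (∀ n, HasStepIntegral (s 0) b (fun x => 1 - chi (Set.Icc (s 0) (s n)) x) (b - s n)) ∧
    (∀ x ∈ Set.Icc (s 0) b,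
      SeqConv (fun n => 1 - chi (Set.Icc (s 0) (s n)) x) (chi (Set.Icc (s 0) b \ A) x)) ∧
    MeasSet (s 0) b (Set.Icc (s 0) b \ A) := by
  have hsep := hcut.2.2
  have hint (n : ℕ) : HasStepIntegral (s 0) b (fun x => 1 - chi (Icc (s 0) (s n)) x) (b - s n) :=
    hasStepIntegral_one_sub_chi_Icc (hmono.monotone n.zero_le) (hsep _ (hmem n) _ hb)
  have hstep (n : ℕ) := (hint n).isStepOn
  have hnonneg (n : ℕ) (x : F) (_ : x ∈ Icc (s 0) b) := one_sub_chi_nonneg (Icc (s 0) (s n)) x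
  have hanti (n : ℕ) (x : F) (_ : x ∈ Icc (s 0) b) :
      1 - chi (Icc (s 0) (s (n + 1))) x ≤ 1 - chi (Icc (s 0) (s n)) x :=
    sub_le_sub_left (chi_mono (Icc_subset_Icc_right (hmono.monotone n.le_succ)) x) 1
  have hcofinal (x : F) (hx : x ∈ A) : ∃ n, x ≤ s n :=
    exists_le_of_mem_Ioc_cover fun h => (hcover x hx h).exists
  have hconv (x : F) (hx : x ∈ Icc (s 0) b) :
      SeqConv (fun n => 1 - chi (Icc (s 0) (s n)) x) (chi (Icc (s 0) b \ A) x) :=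
    seqConv_of_eventually_eq
      (eventually_one_sub_chi_Icc_eq_chi_diff hsep hmem hmono.monotone hcofinal hx)
  exact ⟨hstep, hnonneg, hanti, hint, hconv, _, hstep, hnonneg, hanti, aeOn_of_forall hconv⟩

theorem gap_gives_measurable_set (F : Type*) [Field F] [LinearOrder F] [IsStrictOrderedRing F]
    (A : Set F) (hcut : IsCut A) (hgap : ¬ ∃ c : F, IsCutPoint A c)
    (s : ℕ → F) (hmem : ∀ n, s n ∈ A) (hmono : StrictMono s)
    (hcover : ∀ x ∈ A, s 0 < x → ∃! n : ℕ, x ∈ Set.Ioc (s n) (s (n + 1)))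
    (b : F) (hb : b ∉ A) :
    (∀ n, IsStepOn (s 0) b fun x => 1 - chi (Set.Icc (s 0) (s n)) x) ∧
    (∀ n, ∀ x ∈ Set.Icc (s 0) b, 0 ≤ 1 - chi (Set.Icc (s 0) (s n)) x) ∧
    (∀ n, ∀ x ∈ Set.Icc (s 0) b,
      1 - chi (Set.Icc (s 0) (s (n + 1))) x ≤ 1 - chi (Set.Icc (s 0) (s n)) x) ∧
    (∀ n, HasStepIntegral (s 0) b (fun x => 1 - chi (Set.Icc (s 0) (s n)) x) (b - s n)) ∧
    (∀ x ∈ Set.Icc (s 0) b,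
      SeqConv (fun n => 1 - chi (Set.Icc (s 0) (s n)) x) (chi (Set.Icc (s 0) b \ A) x)) ∧
    MeasSet (s 0) b (Set.Icc (s 0) b \ A) :=
  gap_gives_measurable_set_general F A hcut s hmem hmono hcover b hb

end Littlewood
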